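/- Let 1 < q < p, 0 < f ≤ 1, and define A_f = f^q if 0 < f ≤ (p-1)/p, and A_f = ((p-1)/p)^q (1/(p-q)) (p - q·(p(1-f))^{(p-q)/(p-1)}) if (p-1)/p < f ≤ 1, and Γ = ((p-1)/p)^q p/(p-q). Then for every A with A_f ≤ A ≤ Γ f^{(p-q)/(p-1)} there exists a measurable g : (0,1] → [0,∞) with g(t) ≤ ((p-1)/p) t^{-1/p} on (0,1], ∫₀¹ g = f, and ∫₀¹ g^q = A. -/

import Mathlib

/-!
Write `envelope p t = (p - 1) / p * t ^ (-1 / p)`, so that `∫₀ˢ envelope p = s ^ ((p - 1) / p)`.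
Among the functions `0 ≤ g ≤ envelope p` on `(0, 1]` with `∫ g = f` two are explicit: the envelope
truncated at `a = f ^ (p / (p - 1))`, whose `q`-th moment is `Γ f ^ ((p - q) / (p - 1))`, and
either the constant `f` (if `f ≤ (p - 1) / p`) or the envelope capped at its value at
`b = (p (1 - f)) ^ (p / (p - 1))`, whose `q`-th moment is `A_f`. These constraints are convex, and
`λ ↦ ∫ (λ g₁ + (1 - λ) g₂) ^ q` is continuous by dominated convergence (everything is bounded by
`envelope p ^ q`, integrable as `q < p`), so the intermediate value theorem yields every `A` in
between.
-/

open MeasureTheory Set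
open scoped Interval

section ConvexCombination

variable {α : Type*} [MeasurableSpace α] {μ : Measure α} {s : Set α} {q : ℝ} {B g₁ g₂ : α → ℝ}

lemma convexCombination_mem_Icc {l x y b : ℝ} (hl : l ∈ Icc (0 : ℝ) 1) (hx : x ∈ Icc 0 b)
    (hy : y ∈ Icc 0 b) : l * x + (1 - l) * y ∈ Icc 0 b := by
  simpa only [smul_eq_mul] using
    convex_Icc 0 b hx hy hl.1 (sub_nonneg.2 hl.2) (add_sub_cancel l 1)

theorem continuousOn_setIntegral_convexCombination_rpow (hs : MeasurableSet s) (hq : 0 ≤ q)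
    (hg₁ : Measurable g₁) (hg₂ : Measurable g₂)
    (hg₁B : ∀ x ∈ s, g₁ x ∈ Icc 0 (B x)) (hg₂B : ∀ x ∈ s, g₂ x ∈ Icc 0 (B x))
    (hBq : IntegrableOn (fun x => B x ^ q) s μ) :
    ContinuousOn (fun l : ℝ => ∫ x in s, (l * g₁ x + (1 - l) * g₂ x) ^ q ∂μ) (Icc 0 1) := by
  refine continuousOn_of_dominated (fun l _ => ?_) (fun l hl => ?_) hBq
    (Filter.Eventually.of_forall fun x => Continuous.continuousOn ?_)
  · exact (((hg₁.const_mul l).add (hg₂.const_mul (1 - l))).pow_const q).aestronglyMeasurable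
  · filter_upwards [ae_restrict_mem hs] with x hx
    have h := convexCombination_mem_Icc hl (hg₁B x hx) (hg₂B x hx)
    rw [Real.norm_of_nonneg (Real.rpow_nonneg h.1 q)]
    exact Real.rpow_le_rpow h.1 h.2 hq
  · exact (by fun_prop : Continuous fun l : ℝ => l * g₁ x + (1 - l) * g₂ x).rpow_const
      fun _ => Or.inr hq

theorem exists_convexCombination_setIntegral_rpow_eq (hs : MeasurableSet s) (hq : 0 ≤ q)
    (hg₁ : Measurable g₁) (hg₂ : Measurable g₂)
    (hg₁B : ∀ x ∈ s, g₁ x ∈ Icc 0 (B x)) (hg₂B : ∀ x ∈ s, g₂ x ∈ Icc 0 (B x))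
    (hB : IntegrableOn B s μ) (hBq : IntegrableOn (fun x => B x ^ q) s μ) {f A : ℝ}
    (hg₁f : ∫ x in s, g₁ x ∂μ = f) (hg₂f : ∫ x in s, g₂ x ∂μ = f)
    (hA : A ∈ uIcc (∫ x in s, g₁ x ^ q ∂μ) (∫ x in s, g₂ x ^ q ∂μ)) :
    ∃ g : α → ℝ, Measurable g ∧ (∀ x ∈ s, g x ∈ Icc 0 (B x)) ∧
      ∫ x in s, g x ∂μ = f ∧ ∫ x in s, g x ^ q ∂μ = A := by
  have hφ := continuousOn_setIntegral_convexCombination_rpow hs hq hg₁ hg₂ hg₁B hg₂B hBq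
  rw [← uIcc_of_ge zero_le_one] at hφ
  obtain ⟨l, hl, hlA⟩ := intermediate_value_uIcc hφ (by simpa using hA)
  rw [uIcc_of_ge zero_le_one] at hl
  have integrableOn {g : α → ℝ} (hg : Measurable g) (hgB : ∀ x ∈ s, g x ∈ Icc 0 (B x)) :
      IntegrableOn g s μ :=
    hB.mono' hg.aestronglyMeasurable <| (ae_restrict_mem hs).mono fun x hx => by
      rw [Real.norm_of_nonneg (hgB x hx).1]; exact (hgB x hx).2
  refine ⟨fun x => l * g₁ x + (1 - l) * g₂ x, by fun_prop,
    fun x hx => convexCombination_mem_Icc hl (hg₁B x hx) (hg₂B x hx), ?_, hlA⟩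
  rw [integral_add ((integrableOn hg₁ hg₁B).const_mul l) ((integrableOn hg₂ hg₂B).const_mul _),
    integral_const_mul, integral_const_mul, hg₁f, hg₂f]
  ring

end ConvexCombination

lemma intervalIntegral_ite_le {u v : ℝ → ℝ} {a s b : ℝ} (has : a ≤ s) (hsb : s ≤ b)
    (hu : IntervalIntegrable u volume a s) (hv : IntervalIntegrable v volume s b) :
    ∫ t in a..b, (if t ≤ s then u t else v t) = (∫ t in a..s, u t) + ∫ t in s..b, v t := by
  have hu' : EqOn u (fun t => if t ≤ s then u t else v t) (Ι a s) := fun t ht =>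
    (if_pos (uIoc_of_le has ▸ ht).2).symm
  have hv' : EqOn v (fun t => if t ≤ s then u t else v t) (Ι s b) := fun t ht =>
    (if_neg (not_le.2 (uIoc_of_le hsb ▸ ht).1)).symm
  rw [← intervalIntegral.integral_add_adjacent_intervals (hu.congr hu') (hv.congr hv'),
    intervalIntegral.integral_congr_ae (Filter.Eventually.of_forall fun t ht => (hu' ht).symm),
    intervalIntegral.integral_congr_ae (Filter.Eventually.of_forall fun t ht => (hv' ht).symm)]

noncomputable def envelope (p t : ℝ) : ℝ := (p - 1) / p * t ^ (-(1 : ℝ) / p)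

section Envelope

variable {p q : ℝ}

lemma neg_one_lt_neg_div (hp : 0 < p) (hqp : q < p) : -1 < -q / p := by
  rw [neg_div, neg_lt_neg_iff, div_lt_one hp]; exact hqp

lemma measurable_envelope : Measurable (envelope p) := by
  unfold envelope; fun_prop

lemma envelope_nonneg (hp : 1 < p) {t : ℝ} (ht : 0 ≤ t) : 0 ≤ envelope p t :=
  mul_nonneg (div_nonneg (by linarith) (by linarith)) (Real.rpow_nonneg ht _)

lemma envelope_le_envelope (hp : 1 < p) {s t : ℝ} (hs : 0 < s) (hst : s ≤ t) :
    envelope p t ≤ envelope p s :=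
  mul_le_mul_of_nonneg_left (Real.rpow_le_rpow_of_nonpos hs hst
    (div_nonpos_of_nonpos_of_nonneg (by norm_num) (by linarith)))
    (div_nonneg (by linarith) (by linarith))

lemma envelope_one : envelope p 1 = (p - 1) / p := by
  simp [envelope]

lemma envelope_rpow (hp : 1 < p) {t : ℝ} (ht : 0 ≤ t) (q : ℝ) :
    envelope p t ^ q = ((p - 1) / p) ^ q * t ^ (-q / p) := by
  rw [envelope, Real.mul_rpow (div_nonneg (by linarith) (by linarith)) (Real.rpow_nonneg ht _),
    ← Real.rpow_mul ht]
  ring_nf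

lemma intervalIntegrable_envelope (hp : 1 < p) (a b : ℝ) :
    IntervalIntegrable (envelope p) volume a b :=
  (intervalIntegral.intervalIntegrable_rpow' (neg_one_lt_neg_div (by linarith) hp)).const_mul _

lemma intervalIntegral_envelope (hp : 1 < p) (a b : ℝ) :
    ∫ t in a..b, envelope p t = b ^ ((p - 1) / p) - a ^ ((p - 1) / p) := by
  have he : -(1 : ℝ) / p + 1 = (p - 1) / p := by field_simp; ring
  simp only [envelope]
  rw [intervalIntegral.integral_const_mul,
    integral_rpow (Or.inl (neg_one_lt_neg_div (by linarith) hp)), he]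
  field_simp [(by linarith : p - 1 ≠ 0)]

lemma intervalIntegrable_envelope_rpow (hp : 1 < p) (hqp : q < p) {a b : ℝ}
    (ha : 0 ≤ a) (hb : 0 ≤ b) :
    IntervalIntegrable (fun t => envelope p t ^ q) volume a b :=
  ((intervalIntegral.intervalIntegrable_rpow' (neg_one_lt_neg_div (by linarith) hqp)).const_mul
    (((p - 1) / p) ^ q)).congr fun t ht =>
      (envelope_rpow hp ((le_min ha hb).trans ht.1.le) q).symm

lemma intervalIntegral_envelope_rpow (hp : 1 < p) (hqp : q < p) {a b : ℝ}
    (ha : 0 ≤ a) (hb : 0 ≤ b) :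
    ∫ t in a..b, envelope p t ^ q =
      ((p - 1) / p) ^ q * (p / (p - q)) * (b ^ ((p - q) / p) - a ^ ((p - q) / p)) := by
  have he : -q / p + 1 = (p - q) / p := by field_simp; ring
  rw [intervalIntegral.integral_congr fun t ht => envelope_rpow hp ((le_min ha hb).trans ht.1) q,
    intervalIntegral.integral_const_mul,
    integral_rpow (Or.inl (neg_one_lt_neg_div (by linarith) hqp)), he]
  field_simp [(by linarith : p - q ≠ 0)]

end Envelope

noncomputable def truncatedEnvelope (p a t : ℝ) : ℝ := if t ≤ a then envelope p t else 0

noncomputable def cappedEnvelope (p b t : ℝ) : ℝ := if t ≤ b then envelope p b else envelope p t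

section Extremals

variable {p q : ℝ}

lemma measurable_truncatedEnvelope (a : ℝ) : Measurable (truncatedEnvelope p a) :=
  Measurable.ite measurableSet_Iic measurable_envelope measurable_const

lemma measurable_cappedEnvelope (b : ℝ) : Measurable (cappedEnvelope p b) :=
  Measurable.ite measurableSet_Iic measurable_const measurable_envelope

lemma truncatedEnvelope_mem_Icc (hp : 1 < p) (a : ℝ) {t : ℝ} (ht : 0 ≤ t) :
    truncatedEnvelope p a t ∈ Icc 0 (envelope p t) := by
  unfold truncatedEnvelope
  split_ifs
  · exact ⟨envelope_nonneg hp ht, le_rfl⟩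
  · exact ⟨le_rfl, envelope_nonneg hp ht⟩

lemma cappedEnvelope_mem_Icc (hp : 1 < p) (b : ℝ) {t : ℝ} (ht : 0 < t) :
    cappedEnvelope p b t ∈ Icc 0 (envelope p t) := by
  unfold cappedEnvelope
  split_ifs with htb
  · exact ⟨envelope_nonneg hp (ht.trans_le htb).le, envelope_le_envelope hp ht htb⟩
  · exact ⟨envelope_nonneg hp ht.le, le_rfl⟩

lemma integral_truncatedEnvelope (hp : 1 < p) {a : ℝ} (ha0 : 0 ≤ a) (ha1 : a ≤ 1) :
    ∫ t in Ioc (0 : ℝ) 1, truncatedEnvelope p a t = a ^ ((p - 1) / p) := by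
  rw [← intervalIntegral.integral_of_le zero_le_one]
  unfold truncatedEnvelope
  rw [intervalIntegral_ite_le ha0 ha1 (intervalIntegrable_envelope hp _ _) intervalIntegrable_const,
    intervalIntegral_envelope hp, intervalIntegral.integral_zero,
    Real.zero_rpow (div_pos (by linarith) (by linarith)).ne']
  ring

lemma integral_truncatedEnvelope_rpow (hp : 1 < p) (hq : 0 < q) (hqp : q < p) {a : ℝ}
    (ha0 : 0 ≤ a) (ha1 : a ≤ 1) :
    ∫ t in Ioc (0 : ℝ) 1, truncatedEnvelope p a t ^ q =
      ((p - 1) / p) ^ q * (p / (p - q)) * a ^ ((p - q) / p) := by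
  rw [← intervalIntegral.integral_of_le zero_le_one]
  have hpow : (fun t => truncatedEnvelope p a t ^ q) =
      fun t => if t ≤ a then envelope p t ^ q else 0 := by
    ext t
    unfold truncatedEnvelope
    split_ifs
    · rfl
    · exact Real.zero_rpow hq.ne'
  rw [hpow, intervalIntegral_ite_le ha0 ha1 (intervalIntegrable_envelope_rpow hp hqp le_rfl ha0)
    intervalIntegrable_const, intervalIntegral_envelope_rpow hp hqp le_rfl ha0,
    intervalIntegral.integral_zero, Real.zero_rpow (div_pos (by linarith) (by linarith)).ne']
  ring

lemma envelope_mul_self (hp : 1 < p) {b : ℝ} (hb : 0 ≤ b) :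
    envelope p b * b = (p - 1) / p * b ^ ((p - 1) / p) := by
  have he : (p - 1) / p = -(1 : ℝ) / p + 1 := by field_simp; ring
  rw [envelope, he, Real.rpow_add_one' hb (by rw [← he]; positivity)]
  ring

lemma envelope_rpow_mul_self (hp : 1 < p) (hqp : q < p) {b : ℝ} (hb : 0 ≤ b) :
    envelope p b ^ q * b = ((p - 1) / p) ^ q * b ^ ((p - q) / p) := by
  have he : (p - q) / p = -q / p + 1 := by field_simp; ring
  rw [envelope_rpow hp hb, he, Real.rpow_add_one' hb (by rw [← he]; positivity)]
  ring

lemma integral_cappedEnvelope (hp : 1 < p) {b : ℝ} (hb0 : 0 ≤ b) (hb1 : b ≤ 1) :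
    ∫ t in Ioc (0 : ℝ) 1, cappedEnvelope p b t = 1 - b ^ ((p - 1) / p) / p := by
  rw [← intervalIntegral.integral_of_le zero_le_one]
  unfold cappedEnvelope
  rw [intervalIntegral_ite_le hb0 hb1 intervalIntegrable_const (intervalIntegrable_envelope hp _ _),
    intervalIntegral.integral_const, intervalIntegral_envelope hp, smul_eq_mul, sub_zero,
    mul_comm, envelope_mul_self hp hb0, Real.one_rpow]
  field_simp
  ring

lemma integral_cappedEnvelope_rpow (hp : 1 < p) (hqp : q < p) {b : ℝ} (hb0 : 0 ≤ b)
    (hb1 : b ≤ 1) :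
    ∫ t in Ioc (0 : ℝ) 1, cappedEnvelope p b t ^ q =
      ((p - 1) / p) ^ q * (1 / (p - q)) * (p - q * b ^ ((p - q) / p)) := by
  rw [← intervalIntegral.integral_of_le zero_le_one]
  have hpow : (fun t => cappedEnvelope p b t ^ q) =
      fun t => if t ≤ b then envelope p b ^ q else envelope p t ^ q := by
    ext t
    unfold cappedEnvelope
    split_ifs <;> rfl
  rw [hpow, intervalIntegral_ite_le hb0 hb1 intervalIntegrable_const
    (intervalIntegrable_envelope_rpow hp hqp hb0 zero_le_one), intervalIntegral.integral_const,
    intervalIntegral_envelope_rpow hp hqp hb0 zero_le_one, smul_eq_mul, sub_zero, mul_comm,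
    envelope_rpow_mul_self hp hqp hb0, Real.one_rpow]
  field_simp [(by linarith : p - q ≠ 0)]
  ring

theorem exists_upperExtremal (hp : 1 < p) (hq : 0 < q) (hqp : q < p) {f : ℝ} (hf0 : 0 ≤ f)
    (hf1 : f ≤ 1) :
    ∃ g : ℝ → ℝ, Measurable g ∧ (∀ t ∈ Ioc (0 : ℝ) 1, g t ∈ Icc 0 (envelope p t)) ∧
      ∫ t in Ioc (0 : ℝ) 1, g t = f ∧
      ∫ t in Ioc (0 : ℝ) 1, g t ^ q =
        ((p - 1) / p) ^ q * (p / (p - q)) * f ^ ((p - q) / (p - 1)) := by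
  set a := f ^ (p / (p - 1))
  have ha0 : 0 ≤ a := Real.rpow_nonneg hf0 _
  have ha1 : a ≤ 1 := Real.rpow_le_one hf0 hf1 (div_nonneg (by linarith) (by linarith))
  refine ⟨truncatedEnvelope p a, measurable_truncatedEnvelope a,
    fun t ht => truncatedEnvelope_mem_Icc hp a ht.1.le, ?_, ?_⟩
  · rw [integral_truncatedEnvelope hp ha0 ha1, ← inv_div, Real.rpow_rpow_inv hf0
      (div_pos (by linarith) (by linarith)).ne']
  · rw [integral_truncatedEnvelope_rpow hp hq hqp ha0 ha1, ← Real.rpow_mul hf0]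
    congr 2
    field_simp [(by linarith : p - 1 ≠ 0)]

theorem exists_lowerExtremal (hp : 1 < p) (hqp : q < p) {f : ℝ} (hf0 : 0 ≤ f)
    (hf1 : f ≤ 1) :
    ∃ g : ℝ → ℝ, Measurable g ∧ (∀ t ∈ Ioc (0 : ℝ) 1, g t ∈ Icc 0 (envelope p t)) ∧
      ∫ t in Ioc (0 : ℝ) 1, g t = f ∧
      ∫ t in Ioc (0 : ℝ) 1, g t ^ q = if f ≤ (p - 1) / p then f ^ q
        else ((p - 1) / p) ^ q * (1 / (p - q)) *
          (p - q * (p * (1 - f)) ^ ((p - q) / (p - 1))) := by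
  split_ifs with hfc
  · refine ⟨fun _ => f, measurable_const, fun t ht => ⟨hf0, ?_⟩, by simp, by simp⟩
    calc f ≤ (p - 1) / p := hfc
      _ = envelope p 1 := envelope_one.symm
      _ ≤ envelope p t := envelope_le_envelope hp ht.1 ht.2
  set X := p * (1 - f)
  have hX0 : 0 ≤ X := mul_nonneg (by linarith) (by linarith)
  have hX1 : X ≤ 1 := by
    rw [not_le, div_lt_iff₀ (by linarith)] at hfc
    linarith
  set b := X ^ (p / (p - 1))
  have hb0 : 0 ≤ b := Real.rpow_nonneg hX0 _
  have hb1 : b ≤ 1 := Real.rpow_le_one hX0 hX1 (div_nonneg (by linarith) (by linarith))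
  refine ⟨cappedEnvelope p b, measurable_cappedEnvelope b,
    fun t ht => cappedEnvelope_mem_Icc hp b ht.1, ?_, ?_⟩
  · have hbX : b ^ ((p - 1) / p) = X := by
      rw [← inv_div, Real.rpow_rpow_inv hX0 (div_pos (by linarith) (by linarith)).ne']
    rw [integral_cappedEnvelope hp hb0 hb1, hbX]
    field_simp [X]
    ring
  · rw [integral_cappedEnvelope_rpow hp hqp hb0 hb1, ← Real.rpow_mul hX0]
    congr 4
    field_simp [(by linarith : p - 1 ≠ 0)]

end Extremals

theorem stmt_7 (p q : ℝ) (hq : 1 < q) (hqp : q < p)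
    (f : ℝ) (hf0 : 0 < f) (hf1 : f ≤ 1)
    (Af : ℝ)
    (hAf : Af = if f ≤ (p - 1) / p then f ^ q
      else ((p - 1) / p) ^ q * (1 / (p - q)) *
        (p - q * (p * (1 - f)) ^ ((p - q) / (p - 1))))
    (A : ℝ) (hA1 : Af ≤ A)
    (hA2 : A ≤ ((p - 1) / p) ^ q * (p / (p - q)) * f ^ ((p - q) / (p - 1))) :
    ∃ g : ℝ → ℝ, Measurable g ∧
      (∀ t ∈ Set.Ioc (0:ℝ) 1, 0 ≤ g t ∧ g t ≤ ((p - 1) / p) * t ^ (-(1:ℝ)/p)) ∧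
      (∫ t in Set.Ioc (0:ℝ) 1, g t = f) ∧
      (∫ t in Set.Ioc (0:ℝ) 1, (g t) ^ q = A) := by
  have hp : 1 < p := hq.trans hqp
  have hq0 : 0 < q := by linarith
  obtain ⟨g₁, hg₁, hg₁B, hg₁f, hg₁q⟩ := exists_lowerExtremal hp hqp hf0.le hf1
  obtain ⟨g₂, hg₂, hg₂B, hg₂f, hg₂q⟩ := exists_upperExtremal hp hq0 hqp hf0.le hf1
  have hB := (intervalIntegrable_iff_integrableOn_Ioc_of_le zero_le_one).1
    (intervalIntegrable_envelope hp 0 1)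
  have hBq := (intervalIntegrable_iff_integrableOn_Ioc_of_le zero_le_one).1
    (intervalIntegrable_envelope_rpow (q := q) hp hqp le_rfl zero_le_one)
  obtain ⟨g, hg, hgB, hgf, hgA⟩ := exists_convexCombination_setIntegral_rpow_eq measurableSet_Ioc
    hq0.le hg₁ hg₂ hg₁B hg₂B hB hBq hg₁f hg₂f
    (by rw [hg₁q, hg₂q, ← hAf]; exact Icc_subset_uIcc ⟨hA1, hA2⟩)
  exact ⟨g, hg, hgB, hgf, hgA⟩
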